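/- arXiv:2307.00210 — 2 statements merged into one kernel-verified Lean document; each statement's English description precedes it below -/
import Mathlib

section
/- Let x, y ∈ ℝ^n be two 0/1 vectors (each entry is 0 or 1) with the same number m of ones, and let d ≥ 2. Then the squared Frobenius norm of the difference of their (d-1)-fold outer products satisfies m^(d-2) · ‖x - y‖₂² ≤ ‖x^⊗(d-1) - y^⊗(d-1)‖_F² ≤ (d-1) · m^(d-2) · ‖x - y‖₂², where x^⊗(d-1) denotes the order-(d-1) tensor with entries x_{i₂}·⋯·x_{i_d}. -/
open Finset

/-- Geometric-sum bound: for `0 ≤ s ≤ m`,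
`m^(e-1)*(m-s) ≤ m^e - s^e ≤ e * m^(e-1) * (m-s)` when `e ≥ 1`. -/
lemma pow_sub_pow_bounds (m s : ℝ) (hs : 0 ≤ s) (hsm : s ≤ m) (e : ℕ) (he : 1 ≤ e) :
    m ^ (e - 1) * (m - s) ≤ m ^ e - s ^ e ∧
      m ^ e - s ^ e ≤ (e : ℝ) * m ^ (e - 1) * (m - s) := by
  have hm : 0 ≤ m := hs.trans hsm
  have key : m ^ e - s ^ e = (∑ i ∈ range e, m ^ i * s ^ (e - 1 - i)) * (m - s) :=
    (geom_sum₂_mul m s e).symm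
  have hms : 0 ≤ m - s := by linarith
  constructor
  · rw [key]
    apply mul_le_mul_of_nonneg_right _ hms
    have : m ^ (e - 1) = m ^ (e - 1) * s ^ (e - 1 - (e - 1)) := by
      simp
    rw [this]
    exact Finset.single_le_sum (f := fun i => m ^ i * s ^ (e - 1 - i))
      (fun i _ => mul_nonneg (pow_nonneg hm _) (pow_nonneg hs _))
      (Finset.mem_range.2 (by omega))
  · rw [key]
    apply mul_le_mul_of_nonneg_right _ hms
    calc ∑ i ∈ range e, m ^ i * s ^ (e - 1 - i)
        ≤ ∑ _i ∈ range e, m ^ (e - 1) := by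
          apply Finset.sum_le_sum
          intro i hi
          rw [Finset.mem_range] at hi
          calc m ^ i * s ^ (e - 1 - i) ≤ m ^ i * m ^ (e - 1 - i) :=
                mul_le_mul_of_nonneg_left (pow_le_pow_left₀ hs hsm _) (pow_nonneg hm _)
            _ = m ^ (i + (e - 1 - i)) := (pow_add m i _).symm
            _ = m ^ (e - 1) := by congr 1; omega
      _ = (e : ℝ) * m ^ (e - 1) := by simp [mul_comm]

/-- For 0/1 vectors `x, y ∈ ℝ^n` each with exactly `m` ones and `d ≥ 2`,
`m^(d-2) ‖x - y‖₂² ≤ ‖x^⊗(d-1) - y^⊗(d-1)‖_F² ≤ (d-1) m^(d-2) ‖x - y‖₂²`,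
where the squared Frobenius norm of the order-(d-1) outer power difference is
`∑_{f : (Fin (d-1) → Fin n)} (∏ j, x (f j) - ∏ j, y (f j))²`. -/
theorem stmt_2 (n d m : ℕ) (hd : 2 ≤ d) (x y : Fin n → ℝ)
    (hx01 : ∀ i, x i = 0 ∨ x i = 1) (hy01 : ∀ i, y i = 0 ∨ y i = 1)
    (hxm : ∑ i, x i = m) (hym : ∑ i, y i = m) :
    (m : ℝ) ^ (d - 2) * ∑ i, (x i - y i) ^ 2
        ≤ ∑ f : Fin (d - 1) → Fin n, (∏ j, x (f j) - ∏ j, y (f j)) ^ 2 ∧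
      ∑ f : Fin (d - 1) → Fin n, (∏ j, x (f j) - ∏ j, y (f j)) ^ 2
        ≤ (d - 1 : ℝ) * (m : ℝ) ^ (d - 2) * ∑ i, (x i - y i) ^ 2 := by
  set e := d - 1 with he_def
  have he : 1 ≤ e := by omega
  have hd2 : d - 2 = e - 1 := by omega
  set s : ℝ := ∑ i, x i * y i with hs_def
  have hxsq : ∀ i, x i ^ 2 = x i := fun i => by rcases hx01 i with h | h <;> simp [h]
  have hysq : ∀ i, y i ^ 2 = y i := fun i => by rcases hy01 i with h | h <;> simp [h]
  have hx0 : ∀ i, 0 ≤ x i := fun i => by rcases hx01 i with h | h <;> simp [h]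
  have hy0 : ∀ i, 0 ≤ y i := fun i => by rcases hy01 i with h | h <;> simp [h]
  have hs0 : 0 ≤ s := Finset.sum_nonneg fun i _ => mul_nonneg (hx0 i) (hy0 i)
  have hsm : s ≤ m := by
    rw [← hxm]
    apply Finset.sum_le_sum
    intro i _
    rcases hy01 i with h | h <;> simp [h, hx0 i]
  -- squared distance
  have hdist : ∑ i, (x i - y i) ^ 2 = 2 * (m - s) := by
    have : ∀ i, (x i - y i) ^ 2 = x i + y i - 2 * (x i * y i) := by
      intro i
      have := hxsq i; have := hysq i; ring_nf; nlinarith [hxsq i, hysq i]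
    rw [Finset.sum_congr rfl fun i _ => this i]
    rw [Finset.sum_sub_distrib, Finset.sum_add_distrib, hxm, hym, ← Finset.mul_sum, ← hs_def]
    ring
  -- Frobenius norm
  have hfrob : ∑ f : Fin e → Fin n, (∏ j, x (f j) - ∏ j, y (f j)) ^ 2
      = 2 * ((m : ℝ) ^ e - s ^ e) := by
    have expand : ∀ f : Fin e → Fin n,
        (∏ j, x (f j) - ∏ j, y (f j)) ^ 2
          = ∏ j, (x (f j) * x (f j)) - 2 * ∏ j, (x (f j) * y (f j))
            + ∏ j, (y (f j) * y (f j)) := by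
      intro f
      rw [Finset.prod_mul_distrib, Finset.prod_mul_distrib, Finset.prod_mul_distrib]
      ring
    rw [Finset.sum_congr rfl fun f _ => expand f]
    rw [Finset.sum_add_distrib, Finset.sum_sub_distrib, ← Finset.mul_sum]
    have hxx := Fintype.sum_pow (fun i => x i * x i) e
    have hxy := Fintype.sum_pow (fun i => x i * y i) e
    have hyy := Fintype.sum_pow (fun i => y i * y i) e
    rw [← hxx, ← hxy, ← hyy]
    have h1 : ∑ i, x i * x i = (m : ℝ) := by
      rw [← hxm]; exact Finset.sum_congr rfl fun i _ => by rw [← sq, hxsq]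
    have h2 : ∑ i, y i * y i = (m : ℝ) := by
      rw [← hym]; exact Finset.sum_congr rfl fun i _ => by rw [← sq, hysq]
    rw [h1, h2, ← hs_def]
    ring
  obtain ⟨hlo, hhi⟩ := pow_sub_pow_bounds (m : ℝ) s hs0 hsm e he
  rw [hd2, hdist, hfrob]
  constructor
  · nlinarith
  · have : ((d : ℝ) - 1) = (e : ℝ) := by
      rw [he_def]; push_cast [Nat.cast_sub (by omega : 1 ≤ d)]; ring
    rw [this]
    nlinarith
end

section
/- Let m, M, N be positive integers, α > β > 0, n ≥ 2 an integer, p = α·log(n)/n^(d-1), q = β·log(n)/n^(d-1) ∈ (0,1), M = C(m-1, d-1), N = C(m, d-1). Suppose W₁,...,W_M are i.i.d. Bern(p) and Z₁,...,Z_N are i.i.d. Bern(q), independent of the W's. Then for any γ ∈ ℝ, Pr[∑_{i=1}^M W_i - ∑_{i=1}^N Z_i ≤ (γ/(d-1)!)·log n] ≤ n^{-M(√α - √β)²/n^(d-1) + γ·log(α/β)/(2(d-1)!) + (N - M)(√(αβ) - β)/n^(d-1)}. -/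
/-!
Chernoff's bound for the lower tail of `∑ Wᵢ - ∑ Zⱼ` at the parameter `t = -log (α / β) / 2`,
i.e. `e^t = √(q / p)`, gives `e^{-tε} (1 - p + √(pq))^M (1 - q + √(pq))^N`. Bounding each factor
by `1 + x ≤ e^x` turns this into `exp (-tε - M (p - √(pq)) - N (q - √(pq)))`, and
`p + q - 2√(pq) = (√α - √β)² log n / n^(d-1)` identifies the exponent with the claimed power of `n`.
-/

open MeasureTheory ProbabilityTheory

noncomputable def bernoulliLaw (p : ℝ) : Measure ℝ :=
  ENNReal.ofReal p • Measure.dirac (1 : ℝ) + ENNReal.ofReal (1 - p) • Measure.dirac (0 : ℝ)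

open Real

lemma integrable_ofReal_smul_dirac (f : ℝ → ℝ) (c a : ℝ) :
    Integrable f (ENNReal.ofReal c • Measure.dirac a) :=
  (integrable_dirac enorm_lt_top).smul_measure ENNReal.ofReal_ne_top

lemma integrable_bernoulliLaw (f : ℝ → ℝ) (p : ℝ) : Integrable f (bernoulliLaw p) :=
  (integrable_ofReal_smul_dirac f _ _).add_measure (integrable_ofReal_smul_dirac f _ _)

lemma mgf_id_bernoulliLaw {p : ℝ} (hp0 : 0 ≤ p) (hp1 : p ≤ 1) (t : ℝ) :
    mgf id (bernoulliLaw p) t = 1 - p + p * exp t := by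
  rw [bernoulliLaw, mgf_add_measure (integrable_ofReal_smul_dirac _ _ _)
      (integrable_ofReal_smul_dirac _ _ _),
    mgf_smul_measure, mgf_smul_measure, ENNReal.toReal_ofReal hp0,
    ENNReal.toReal_ofReal (sub_nonneg.2 hp1)]
  simp only [mgf, integral_dirac, id, mul_one, mul_zero, exp_zero]
  ring

section BernoulliVariable

variable {Ω : Type*} [MeasurableSpace Ω] {μ : Measure Ω} {X : Ω → ℝ} {p : ℝ}

lemma integrable_exp_mul_of_map_eq_bernoulliLaw (hX : Measurable X)
    (hlaw : μ.map X = bernoulliLaw p) (t : ℝ) : Integrable (fun ω ↦ exp (t * X ω)) μ :=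
  (hlaw ▸ integrable_bernoulliLaw (fun x ↦ exp (t * x)) p).comp_measurable hX

lemma mgf_of_map_eq_bernoulliLaw (hX : Measurable X) (hlaw : μ.map X = bernoulliLaw p)
    (hp0 : 0 ≤ p) (hp1 : p ≤ 1) (t : ℝ) : mgf X μ t = 1 - p + p * exp t := by
  rw [← mgf_id_map hX.aemeasurable, hlaw, mgf_id_bernoulliLaw hp0 hp1]

end BernoulliVariable

theorem measure_sum_sub_sum_le_of_bernoulli {Ω ι κ : Type*} [MeasurableSpace Ω]
    {μ : Measure Ω} [Fintype ι] [Fintype κ] {p q : ℝ} (hp0 : 0 ≤ p) (hp1 : p ≤ 1)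
    (hq0 : 0 ≤ q) (hq1 : q ≤ 1) {W : ι → Ω → ℝ} {Z : κ → Ω → ℝ}
    (hW : ∀ i, Measurable (W i)) (hZ : ∀ j, Measurable (Z j))
    (hWlaw : ∀ i, μ.map (W i) = bernoulliLaw p) (hZlaw : ∀ j, μ.map (Z j) = bernoulliLaw q)
    (hindep : iIndepFun (Sum.elim W Z) μ) {t : ℝ} (ht : t ≤ 0) (ε : ℝ) :
    μ {ω | ∑ i, W i ω - ∑ j, Z j ω ≤ ε} ≤
      ENNReal.ofReal (exp (-t * ε) * ((1 - p + p * exp t) ^ Fintype.card ι *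
        (1 - q + q * exp (-t)) ^ Fintype.card κ)) := by
  have := hindep.isProbabilityMeasure
  set Y : ι ⊕ κ → Ω → ℝ := Sum.elim W fun j ↦ -Z j
  have hY : ∀ k, Measurable (Y k) := Sum.rec hW fun j ↦ (hZ j).neg
  have hYindep : iIndepFun Y μ := by
    convert hindep.comp (Sum.elim (fun _ ↦ id) fun _ ↦ Neg.neg)
      (Sum.rec (fun _ ↦ measurable_id) fun _ ↦ measurable_neg) using 1
    funext k
    cases k <;> rfl
  have hYint : ∀ k ∈ Finset.univ, Integrable (fun ω ↦ exp (t * Y k ω)) μ := by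
    rintro (i | j) -
    · exact integrable_exp_mul_of_map_eq_bernoulliLaw (hW i) (hWlaw i) t
    · simpa [Y] using integrable_exp_mul_of_map_eq_bernoulliLaw (hZ j) (hZlaw j) (-t)
  have hevent : {ω | ∑ i, W i ω - ∑ j, Z j ω ≤ ε} = {ω | (∑ k, Y k) ω ≤ ε} := by
    ext ω
    simp [Y, Fintype.sum_sum_type, sub_eq_add_neg]
  have hmgf : mgf (∑ k, Y k) μ t =
      (1 - p + p * exp t) ^ Fintype.card ι * (1 - q + q * exp (-t)) ^ Fintype.card κ := by
    rw [hYindep.mgf_sum hY, Fintype.prod_sum_type]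
    simp only [Y, Sum.elim_inl, Sum.elim_inr, mgf_neg,
      mgf_of_map_eq_bernoulliLaw (hW _) (hWlaw _) hp0 hp1,
      mgf_of_map_eq_bernoulliLaw (hZ _) (hZlaw _) hq0 hq1, Finset.prod_const, Finset.card_univ]
  rw [hevent, ← hmgf, ← ofReal_measureReal]
  exact ENNReal.ofReal_le_ofReal <|
    measure_le_le_exp_mul_mgf ε ht (hYindep.integrable_exp_mul_sum hY hYint)

lemma exp_half_log_div {a b : ℝ} (ha : 0 < a) (hb : 0 < b) :
    exp (log (a / b) / 2) = √(a / b) := by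
  rw [← exp_log (sqrt_pos.2 (div_pos ha hb)), log_sqrt (div_pos ha hb).le]

lemma mul_exp_half_log_div {a b : ℝ} (ha : 0 < a) (hb : 0 < b) :
    b * exp (log (a / b) / 2) = √(a * b) := by
  rw [exp_half_log_div ha hb, sqrt_div' _ hb.le, sqrt_mul ha.le]
  field_simp
  rw [sq_sqrt hb.le]

lemma mul_exp_neg_half_log_div {a b : ℝ} (ha : 0 < a) (hb : 0 < b) :
    a * exp (-(log (a / b) / 2)) = √(a * b) := by
  rw [← neg_div, ← log_inv, inv_div, mul_comm a b, mul_exp_half_log_div hb ha]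

lemma one_sub_add_pow_le_exp {p s : ℝ} (hp : p ≤ 1) (hs : 0 ≤ s) (k : ℕ) :
    (1 - p + s) ^ k ≤ exp (k * (s - p)) := by
  rw [exp_nat_mul]
  exact pow_le_pow_left₀ (by linarith) (by linarith [add_one_le_exp (s - p)]) k

theorem stmt_9_general {Ω : Type*} [MeasurableSpace Ω] (μ : Measure Ω)
    (n d : ℕ) (hn : 2 ≤ n)
    (α β : ℝ) (hβ : 0 < β) (hβα : β < α)
    (p q : ℝ)
    (hpdef : p = α * Real.log n / (n : ℝ) ^ (d - 1))
    (hqdef : q = β * Real.log n / (n : ℝ) ^ (d - 1))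
    (hp : p ∈ Set.Ioo (0 : ℝ) 1) (hq : q ∈ Set.Ioo (0 : ℝ) 1)
    (M N : ℕ)
    (W : Fin M → Ω → ℝ) (Z : Fin N → Ω → ℝ)
    (hWmeas : ∀ i, Measurable (W i)) (hZmeas : ∀ i, Measurable (Z i))
    (hWlaw : ∀ i, Measure.map (W i) μ = bernoulliLaw p)
    (hZlaw : ∀ i, Measure.map (Z i) μ = bernoulliLaw q)
    (hindep : iIndepFun
      (Sum.elim W Z : Fin M ⊕ Fin N → Ω → ℝ) μ)
    (γ : ℝ) :
    μ {ω | ∑ i, W i ω - ∑ i, Z i ω ≤ γ / (Nat.factorial (d - 1)) * Real.log n}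
      ≤ ENNReal.ofReal ((n : ℝ) ^
          (-(M * (Real.sqrt α - Real.sqrt β) ^ 2 / (n : ℝ) ^ (d - 1))
            + γ * Real.log (α / β) / (2 * Nat.factorial (d - 1))
            + ((N : ℝ) - M) * (Real.sqrt (α * β) - β) / (n : ℝ) ^ (d - 1))) := by
  have hα : 0 < α := hβ.trans hβα
  have hn0 : (0 : ℝ) < n := Nat.cast_pos.2 (by omega)
  set L := log n / (n : ℝ) ^ (d - 1)
  set t := -(log (α / β) / 2)
  set ε := γ / (Nat.factorial (d - 1)) * log n
  have ht : t ≤ 0 := neg_nonpos.2 (half_pos (log_pos ((one_lt_div hβ).2 hβα))).le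
  have hpe : p * exp t = √(α * β) * L := by
    rw [hpdef, ← mul_exp_neg_half_log_div hα hβ]
    ring
  have hqe : q * exp (-t) = √(α * β) * L := by
    rw [hqdef, neg_neg, ← mul_exp_half_log_div hα hβ]
    ring
  have hexponent : -t * ε + (M * (√(α * β) * L - p) + N * (√(α * β) * L - q)) =
      log n * (-(M * (√α - √β) ^ 2 / (n : ℝ) ^ (d - 1))
        + γ * log (α / β) / (2 * Nat.factorial (d - 1))
        + ((N : ℝ) - M) * (√(α * β) - β) / (n : ℝ) ^ (d - 1)) := by
    rw [sub_sq, sq_sqrt hα.le, sq_sqrt hβ.le, sqrt_mul hα.le]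
    simp only [t, ε, L, hpdef, hqdef]
    field_simp
    ring
  calc μ {ω | ∑ i, W i ω - ∑ i, Z i ω ≤ ε}
      ≤ ENNReal.ofReal (exp (-t * ε) * ((1 - p + p * exp t) ^ M * (1 - q + q * exp (-t)) ^ N)) := by
        simpa only [Fintype.card_fin] using measure_sum_sub_sum_le_of_bernoulli
          hp.1.le hp.2.le hq.1.le hq.2.le hWmeas hZmeas hWlaw hZlaw hindep ht ε
    _ ≤ ENNReal.ofReal (exp (-t * ε) *
        (exp (M * (√(α * β) * L - p)) * exp (N * (√(α * β) * L - q)))) := by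
      have hs : 0 ≤ √(α * β) * L := by positivity
      rw [hpe, hqe]
      gcongr
      · exact pow_nonneg (by linarith [hq.2]) N
      · exact one_sub_add_pow_le_exp hp.2.le hs M
      · exact one_sub_add_pow_le_exp hq.2.le hs N
    _ = _ := by rw [← exp_add, ← exp_add, hexponent, rpow_def_of_pos hn0]

/-- Binomial tail inequality: with `p = α log n / n^(d-1)`, `q = β log n / n^(d-1)`,
`M = C(m-1, d-1)`, `N = C(m, d-1)`, and independent sums of i.i.d. `Bern(p)` and
`Bern(q)` variables, for any `γ ∈ ℝ`,
`Pr[∑ W_i - ∑ Z_i ≤ (γ/(d-1)!) log n]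
  ≤ n^{-M(√α-√β)²/n^(d-1) + γ log(α/β)/(2(d-1)!) + (N-M)(√(αβ)-β)/n^(d-1)}`. -/
theorem stmt_9 {Ω : Type*} [MeasurableSpace Ω] (μ : Measure Ω) [IsProbabilityMeasure μ]
    (m n d : ℕ) (hm : 0 < m) (hn : 2 ≤ n) (hd : 2 ≤ d)
    (α β : ℝ) (hβ : 0 < β) (hβα : β < α)
    (p q : ℝ)
    (hpdef : p = α * Real.log n / (n : ℝ) ^ (d - 1))
    (hqdef : q = β * Real.log n / (n : ℝ) ^ (d - 1))
    (hp : p ∈ Set.Ioo (0 : ℝ) 1) (hq : q ∈ Set.Ioo (0 : ℝ) 1)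
    (M N : ℕ) (hM : M = (m - 1).choose (d - 1)) (hN : N = m.choose (d - 1))
    (hMpos : 0 < M) (hNpos : 0 < N)
    (W : Fin M → Ω → ℝ) (Z : Fin N → Ω → ℝ)
    (hWmeas : ∀ i, Measurable (W i)) (hZmeas : ∀ i, Measurable (Z i))
    (hWlaw : ∀ i, Measure.map (W i) μ = bernoulliLaw p)
    (hZlaw : ∀ i, Measure.map (Z i) μ = bernoulliLaw q)
    (hindep : iIndepFun
      (Sum.elim W Z : Fin M ⊕ Fin N → Ω → ℝ) μ)
    (γ : ℝ) :
    μ {ω | ∑ i, W i ω - ∑ i, Z i ω ≤ γ / (Nat.factorial (d - 1)) * Real.log n}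
      ≤ ENNReal.ofReal ((n : ℝ) ^
          (-(M * (Real.sqrt α - Real.sqrt β) ^ 2 / (n : ℝ) ^ (d - 1))
            + γ * Real.log (α / β) / (2 * Nat.factorial (d - 1))
            + ((N : ℝ) - M) * (Real.sqrt (α * β) - β) / (n : ℝ) ^ (d - 1))) :=
  stmt_9_general μ n d hn α β hβ hβα p q hpdef hqdef hp hq M N W Z hWmeas hZmeas hWlaw hZlaw hindep
    γ
end
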